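/- Let d ≥ 1 and 0 < σ < d/2. With G_t the Hermite heat kernel on ℝ^d and K^σ(x,y) = Γ(σ)^{-1} ∫_0^∞ G_t(x,y) t^{σ-1} dt, there is a constant C such that K^σ(x,y) ≤ C ‖x−y‖^{2σ−d} for all x ≠ y with ‖x−y‖ < 1. -/

import Mathlib

open MeasureTheory Real

/-- The Hermite heat kernel on ℝ^d. -/
noncomputable def hermiteHeatKernel (d : ℕ) (t : ℝ) (x y : EuclideanSpace ℝ (Fin d)) : ℝ :=
  (2 * Real.pi * Real.sinh (2 * t)) ^ (-(d : ℝ) / 2) *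
    Real.exp (-(1 / 4) * (Real.tanh t * ‖x + y‖ ^ 2 +
      (Real.cosh t / Real.sinh t) * ‖x - y‖ ^ 2))

/-!
Since `sinh (2t) ≥ 2t`, `tanh t ≥ 0` and `coth t ≥ 1/t`, the Hermite heat kernel is dominated by
the Euclidean heat kernel `(4πt)^(-d/2) exp (-‖x - y‖² / 4t)`. Integrated against `t^(σ-1)`, the
latter becomes a Gamma integral after the substitution `t = 1/u`, convergent because `σ < d/2`,
and gives exactly the Riesz kernel `(4π)^(-d/2) 4^(d/2-σ) Γ(d/2-σ) ‖x - y‖^(2σ-d)`.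
-/

open Set

namespace Real

lemma sinh_le_mul_cosh {t : ℝ} (ht : 0 < t) : sinh t ≤ t * cosh t := by
  obtain ⟨c, hc, hslope⟩ := exists_hasDerivAt_eq_slope sinh cosh ht
    continuous_sinh.continuousOn fun x _ => hasDerivAt_sinh x
  have hcosh : cosh c ≤ cosh t :=
    cosh_le_cosh.mpr (by rw [abs_of_pos hc.1, abs_of_pos ht]; exact hc.2.le)
  rw [sinh_zero, sub_zero, sub_zero, eq_div_iff ht.ne'] at hslope
  nlinarith

lemma inv_le_cosh_div_sinh {t : ℝ} (ht : 0 < t) : t⁻¹ ≤ cosh t / sinh t := by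
  rw [inv_eq_one_div, div_le_div_iff₀ ht (sinh_pos_iff.mpr ht), one_mul, mul_comm]
  exact sinh_le_mul_cosh ht

/- The substitution `t = x⁻¹` turns the integrand `t ^ (-s - 1) * exp (-(a / t))` into the
Gamma integrand `x ^ (s - 1) * exp (-(a * x))`. -/
lemma abs_mul_rpow_smul_comp_rpow_neg_one {s a x : ℝ} (hx : 0 < x) :
    (|(-1 : ℝ)| * x ^ ((-1 : ℝ) - 1)) •
        ((x ^ (-1 : ℝ)) ^ (-s - 1) * exp (-(a / x ^ (-1 : ℝ)))) =
      x ^ (s - 1) * exp (-(a * x)) := by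
  rw [smul_eq_mul, abs_neg, abs_one, one_mul, ← rpow_mul hx.le, rpow_neg_one, div_inv_eq_mul,
    ← mul_assoc, ← rpow_add hx]
  ring_nf

lemma integrableOn_rpow_neg_mul_exp_neg_div {s a : ℝ} (hs : 0 < s) (ha : 0 < a) :
    IntegrableOn (fun t => t ^ (-s - 1) * exp (-(a / t))) (Ioi 0) := by
  rw [← integrableOn_Ioi_comp_rpow_iff _ (by norm_num : (-1 : ℝ) ≠ 0)]
  refine (integrableOn_congr_fun (fun x hx => ?_) measurableSet_Ioi).mpr
    ((integrableOn_rpow_mul_exp_neg_mul_rpow (by linarith : -1 < s - 1) one_pos ha))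
  rw [abs_mul_rpow_smul_comp_rpow_neg_one hx, rpow_one, neg_mul]

lemma integral_rpow_neg_mul_exp_neg_div {s a : ℝ} (hs : 0 < s) (ha : 0 < a) :
    ∫ t in Ioi 0, t ^ (-s - 1) * exp (-(a / t)) = a ^ (-s) * Gamma s := by
  rw [← integral_comp_rpow_Ioi _ (by norm_num : (-1 : ℝ) ≠ 0),
    setIntegral_congr_fun measurableSet_Ioi fun x hx => abs_mul_rpow_smul_comp_rpow_neg_one hx,
    integral_rpow_mul_exp_neg_mul_Ioi hs ha, one_div, inv_rpow ha.le, rpow_neg ha.le]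

end Real

section HermiteHeatKernel

variable {d : ℕ} {t : ℝ} (x y : EuclideanSpace ℝ (Fin d))

lemma hermiteHeatKernel_nonneg (ht : 0 < t) : 0 ≤ hermiteHeatKernel d t x y := by
  have : 0 < sinh (2 * t) := sinh_pos_iff.mpr (by linarith)
  unfold hermiteHeatKernel
  positivity

lemma hermiteHeatKernel_le (ht : 0 < t) :
    hermiteHeatKernel d t x y ≤
      (4 * π) ^ (-(d : ℝ) / 2) * (t ^ (-(d : ℝ) / 2) * exp (-(‖x - y‖ ^ 2 / 4 / t))) := by
  have hprefactor : (2 * π * sinh (2 * t)) ^ (-(d : ℝ) / 2) ≤ (4 * π * t) ^ (-(d : ℝ) / 2) :=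
    rpow_le_rpow_of_nonpos (by positivity)
      (by nlinarith [self_lt_sinh_iff.mpr (by linarith : 0 < 2 * t), pi_pos])
      (by have : (0 : ℝ) ≤ d := d.cast_nonneg; linarith)
  have hexponent : -(1 / 4) * (tanh t * ‖x + y‖ ^ 2 + cosh t / sinh t * ‖x - y‖ ^ 2) ≤
      -(‖x - y‖ ^ 2 / 4 / t) := by
    have htanh : 0 ≤ tanh t * ‖x + y‖ ^ 2 := by
      rw [tanh_eq_sinh_div_cosh]
      have := sinh_pos_iff.mpr ht
      positivity
    have hcoth := mul_le_mul_of_nonneg_right (inv_le_cosh_div_sinh ht) (sq_nonneg ‖x - y‖)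
    rw [show ‖x - y‖ ^ 2 / 4 / t = 1 / 4 * (t⁻¹ * ‖x - y‖ ^ 2) by ring]
    linarith
  rw [mul_rpow (by positivity) ht.le] at hprefactor
  rw [← mul_assoc]
  exact mul_le_mul hprefactor (exp_le_exp.mpr hexponent) (exp_pos _).le (by positivity)

end HermiteHeatKernel

lemma integral_hermiteHeatKernel_mul_rpow_le {d : ℕ} {σ : ℝ} (hσ : σ < (d : ℝ) / 2)
    {x y : EuclideanSpace ℝ (Fin d)} (hxy : x ≠ y) :
    ∫ t in Ioi 0, hermiteHeatKernel d t x y * t ^ (σ - 1) ≤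
      (4 * π) ^ (-(d : ℝ) / 2) * 4 ^ ((d : ℝ) / 2 - σ) * Gamma ((d : ℝ) / 2 - σ) *
        ‖x - y‖ ^ (2 * σ - d) := by
  set s := (d : ℝ) / 2 - σ with hs_def
  have hs : 0 < s := by linarith
  have hr : 0 < ‖x - y‖ := norm_pos_iff.mpr (sub_ne_zero.mpr hxy)
  set a := ‖x - y‖ ^ 2 / 4
  have ha : 0 < a := by positivity
  have hbound : ∀ t ∈ Ioi (0 : ℝ), hermiteHeatKernel d t x y * t ^ (σ - 1) ≤
      (4 * π) ^ (-(d : ℝ) / 2) * (t ^ (-s - 1) * exp (-(a / t))) := fun t ht =>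
    calc hermiteHeatKernel d t x y * t ^ (σ - 1)
        ≤ (4 * π) ^ (-(d : ℝ) / 2) * (t ^ (-(d : ℝ) / 2) * exp (-(a / t))) * t ^ (σ - 1) :=
          mul_le_mul_of_nonneg_right (hermiteHeatKernel_le x y ht) (rpow_nonneg ht.le _)
      _ = (4 * π) ^ (-(d : ℝ) / 2) * (t ^ (-s - 1) * exp (-(a / t))) := by
          rw [show -s - 1 = -(d : ℝ) / 2 + (σ - 1) by ring, rpow_add ht]
          ring
  calc ∫ t in Ioi 0, hermiteHeatKernel d t x y * t ^ (σ - 1)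
      ≤ ∫ t in Ioi 0, (4 * π) ^ (-(d : ℝ) / 2) * (t ^ (-s - 1) * exp (-(a / t))) := by
        refine integral_mono_of_nonneg ?_
          ((integrableOn_rpow_neg_mul_exp_neg_div hs ha).const_mul _) ?_
        · filter_upwards [ae_restrict_mem measurableSet_Ioi] with t ht
          exact mul_nonneg (hermiteHeatKernel_nonneg x y ht) (rpow_nonneg ht.le _)
        · filter_upwards [ae_restrict_mem measurableSet_Ioi] with t ht
          exact hbound t ht
    _ = (4 * π) ^ (-(d : ℝ) / 2) * (a ^ (-s) * Gamma s) := by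
        rw [integral_const_mul, integral_rpow_neg_mul_exp_neg_div hs ha]
    _ = _ := by
        rw [div_rpow (by positivity) (by norm_num), ← rpow_natCast, ← rpow_mul hr.le,
          rpow_neg (by norm_num : (0 : ℝ) ≤ 4), show ((2 : ℕ) : ℝ) * -s = 2 * σ - d by
            rw [hs_def]; push_cast; ring]
        field_simp

theorem stmt_6_general (d : ℕ) (σ : ℝ) (hσ : 0 < σ) (hσ' : σ < (d : ℝ) / 2) :
    ∃ C > 0, ∀ x y : EuclideanSpace ℝ (Fin d), x ≠ y → ‖x - y‖ < 1 →
      (Real.Gamma σ)⁻¹ *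
        (∫ t in Set.Ioi (0:ℝ), hermiteHeatKernel d t x y * t ^ (σ - 1)) ≤
      C * ‖x - y‖ ^ (2 * σ - d) := by
  have hΓσ : 0 < Gamma σ := Gamma_pos_of_pos hσ
  have hΓ : 0 < Gamma ((d : ℝ) / 2 - σ) := Gamma_pos_of_pos (by linarith)
  refine ⟨(Gamma σ)⁻¹ * ((4 * π) ^ (-(d : ℝ) / 2) * 4 ^ ((d : ℝ) / 2 - σ) *
    Gamma ((d : ℝ) / 2 - σ)), by positivity, fun x y hxy _ => ?_⟩
  rw [mul_assoc]
  exact mul_le_mul_of_nonneg_left (integral_hermiteHeatKernel_mul_rpow_le hσ' hxy)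
    (inv_nonneg.mpr hΓσ.le)

theorem stmt_6 (d : ℕ) (hd : 1 ≤ d) (σ : ℝ) (hσ : 0 < σ) (hσ' : σ < (d : ℝ) / 2) :
    ∃ C > 0, ∀ x y : EuclideanSpace ℝ (Fin d), x ≠ y → ‖x - y‖ < 1 →
      (Real.Gamma σ)⁻¹ *
        (∫ t in Set.Ioi (0:ℝ), hermiteHeatKernel d t x y * t ^ (σ - 1)) ≤
      C * ‖x - y‖ ^ (2 * σ - d) :=
  stmt_6_general d σ hσ hσ'
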